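/- arXiv:1807.00884 — 4 statements merged into one kernel-verified Lean document; each statement's English description precedes it below -/
import Mathlib

section
/- Let D be a complete chain and μ a Scott-continuous Borel sub-probability measure on D with cumulative distribution function F_μ(x) = μ(↓x). If G_μ : [0,1] → D is the lower adjoint of F_μ (i.e., G_μ(r) ≤ x ⟺ r ≤ F_μ(x)), then the pushforward of Lebesgue measure λ on [0,1] under G_μ equals μ. -/
open MeasureTheory

/-- A set is Scott open if it is an upper set and every directed set whose supremum
lies in it meets it. -/
def ScottOpen {α : Type*} [Preorder α] (U : Set α) : Prop :=
  IsUpperSet U ∧ ∀ S : Set α, S.Nonempty → DirectedOn (· ≤ ·) S →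
    ∀ d : α, IsLUB S d → d ∈ U → (S ∩ U).Nonempty

/-- `x` is way below `y`. -/
def WayBelow {α : Type*} [Preorder α] (x y : α) : Prop :=
  ∀ S : Set α, S.Nonempty → DirectedOn (· ≤ ·) S → ∀ d : α, IsLUB S d → y ≤ d → ∃ s ∈ S, x ≤ s

lemma ioi_scottOpen {D : Type*} [CompleteLinearOrder D] (x : D) : ScottOpen (Set.Ioi x) := by
  constructor
  · intro a b hab ha
    exact lt_of_lt_of_le ha hab
  · intro S hS hdir d hlub hd
    by_contra h
    have hub : x ∈ upperBounds S := by
      intro s hs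
      by_contra hxs
      exact h ⟨s, hs, lt_of_not_ge hxs⟩
    exact absurd (hlub.2 hub) (not_le.mpr hd)

lemma scottOpen_pi {D : Type*} [CompleteLinearOrder D] :
    IsPiSystem {U : Set D | ScottOpen U} := by
  intro U hU V hV _
  refine ⟨hU.1.inter hV.1, ?_⟩
  intro S hS hdir d hlub hd
  obtain ⟨s, hsS, hsU⟩ := hU.2 S hS hdir d hlub hd.1
  obtain ⟨t, htS, htV⟩ := hV.2 S hS hdir d hlub hd.2
  obtain ⟨u, huS, hsu, htu⟩ := hdir s hsS t htS
  exact ⟨u, huS, hU.1 hsu hsU, hV.1 htu htV⟩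

lemma scottOpen_eq {D : Type*} [CompleteLinearOrder D] {U : Set D} (hU : ScottOpen U)
    (hne : Uᶜ.Nonempty) : U = Set.Ioi (sSup Uᶜ) := by
  have hdown : IsLowerSet Uᶜ := hU.1.compl
  have hdir : DirectedOn (· ≤ ·) (Uᶜ : Set D) := by
    intro a ha b hb
    rcases le_total a b with h | h
    · exact ⟨b, hb, h, le_rfl⟩
    · exact ⟨a, ha, le_rfl, h⟩
  have hlub : IsLUB (Uᶜ : Set D) (sSup Uᶜ) := isLUB_sSup _
  have hmem : sSup Uᶜ ∈ (Uᶜ : Set D) := by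
    by_contra h
    obtain ⟨s, hs1, hs2⟩ := hU.2 Uᶜ hne hdir _ hlub (not_not.mp h)
    exact hs1 hs2
  ext y
  simp only [Set.mem_Ioi]
  constructor
  · intro hy
    by_contra h
    push_neg at h
    exact (hdown h hmem) hy
  · intro hy
    by_contra h
    have hyc : y ∈ (Uᶜ : Set D) := h
    exact absurd (le_sSup hyc) (not_le.mpr hy)

/-- If `G_μ : [0,1] → D` is the lower adjoint of the cumulative distribution function
`F_μ(x) = μ(↓x)` of a Scott-continuous sub-probability measure `μ` on a countably based
complete chain `D`, then the pushforward of Lebesgue measure on `[0,1]` under `G_μ` is `μ`. -/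
theorem stmt6 {D : Type*} [CompleteLinearOrder D]
    (B : Set D) (hBcount : B.Countable)
    (hbasis : ∀ y : D, DirectedOn (· ≤ ·) {b ∈ B | WayBelow b y} ∧
      IsLUB {b ∈ B | WayBelow b y} y)
    (μ : @Measure D (MeasurableSpace.generateFrom {U : Set D | ScottOpen U}))
    (hsub : μ Set.univ ≤ 1)
    (hcont : ∀ 𝒰 : Set (Set D), (∀ U ∈ 𝒰, ScottOpen U) → 𝒰.Nonempty →
      DirectedOn (· ⊆ ·) 𝒰 → μ (⋃₀ 𝒰) = ⨆ U ∈ 𝒰, μ U)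
    (G : ℝ → D)
    (hGmeas : @Measurable ℝ D _ (MeasurableSpace.generateFrom {U : Set D | ScottOpen U}) G)
    (hadj : ∀ r ∈ Set.Icc (0:ℝ) 1, ∀ x : D, G r ≤ x ↔ ENNReal.ofReal r ≤ μ (Set.Iic x)) :
    @Measure.map ℝ D _ (MeasurableSpace.generateFrom {U : Set D | ScottOpen U}) G
      (volume.restrict (Set.Icc (0:ℝ) 1)) = μ := by
  letI : MeasurableSpace D := MeasurableSpace.generateFrom {U : Set D | ScottOpen U}
  have hIic : ∀ x : D, MeasurableSet (Set.Iic x) := by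
    intro x
    have h1 : MeasurableSet (Set.Ioi x) :=
      MeasurableSpace.measurableSet_generateFrom (ioi_scottOpen x)
    have := h1.compl
    rwa [Set.compl_Ioi] at this
  have huniv : μ Set.univ = 1 := by
    refine le_antisymm hsub ?_
    have := (hadj 1 (by norm_num) ⊤).mp le_top
    rwa [Set.Iic_top, ENNReal.ofReal_one] at this
  haveI : IsFiniteMeasure μ := ⟨by rw [huniv]; exact ENNReal.one_lt_top⟩
  haveI hfin : IsFiniteMeasure (volume.restrict (Set.Icc (0:ℝ) 1)) := by
    constructor
    rw [Measure.restrict_apply_univ, Real.volume_Icc]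
    exact ENNReal.ofReal_lt_top
  -- the universal case computation
  have hmapuniv : (@Measure.map ℝ D _ _ G (volume.restrict (Set.Icc (0:ℝ) 1))) Set.univ = 1 := by
    rw [Measure.map_apply hGmeas MeasurableSet.univ, Set.preimage_univ,
      Measure.restrict_apply_univ, Real.volume_Icc]
    norm_num
  refine MeasureTheory.ext_of_generate_finite {U : Set D | ScottOpen U} rfl scottOpen_pi ?_ ?_
  · intro U hU
    have hUmeas : MeasurableSet U := MeasurableSpace.measurableSet_generateFrom hU
    rcases Set.eq_empty_or_nonempty (Uᶜ) with hc | hne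
    · have hUuniv : U = Set.univ := by
        rw [← Set.compl_empty, ← hc, compl_compl]
      rw [hUuniv, hmapuniv, huniv]
    · set x := sSup (Uᶜ) with hx
      have hUx : U = Set.Ioi x := scottOpen_eq hU hne
      set t := (μ (Set.Iic x)).toReal with htdef
      have hμx : μ (Set.Iic x) ≠ ⊤ := measure_ne_top μ _
      have hμt : μ (Set.Iic x) = ENNReal.ofReal t := (ENNReal.ofReal_toReal hμx).symm
      have ht0 : 0 ≤ t := ENNReal.toReal_nonneg
      have hμle : μ (Set.Iic x) ≤ 1 := by
        rw [← huniv]; exact measure_mono (Set.subset_univ _)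
      have ht1 : t ≤ 1 := by
        have := ENNReal.toReal_mono ENNReal.one_ne_top hμle
        simpa using this
      have hpre : G ⁻¹' U ∩ Set.Icc (0:ℝ) 1 = Set.Ioc t 1 := by
        ext r
        simp only [Set.mem_inter_iff, Set.mem_preimage, hUx, Set.mem_Ioi, Set.mem_Icc,
          Set.mem_Ioc]
        constructor
        · rintro ⟨hGr, hr0, hr1⟩
          refine ⟨?_, hr1⟩
          have hnle : ¬ ENNReal.ofReal r ≤ μ (Set.Iic x) := fun hle =>
            absurd ((hadj r ⟨hr0, hr1⟩ x).mpr hle) (not_le.mpr hGr)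
          exact (ENNReal.lt_ofReal_iff_toReal_lt hμx).mp (not_le.mp hnle)
        · rintro ⟨htr, hr1⟩
          have hr0 : 0 ≤ r := le_of_lt (lt_of_le_of_lt ht0 htr)
          refine ⟨?_, hr0, hr1⟩
          have hlt : μ (Set.Iic x) < ENNReal.ofReal r :=
            (ENNReal.lt_ofReal_iff_toReal_lt hμx).mpr htr
          exact lt_of_not_ge fun hle =>
            (not_le.mpr hlt) ((hadj r ⟨hr0, hr1⟩ x).mp hle)
      rw [Measure.map_apply hGmeas hUmeas, Measure.restrict_apply (hGmeas hUmeas), hpre,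
        Real.volume_Ioc]
      rw [hUx, ← Set.compl_Iic, measure_compl (hIic x) hμx, huniv, hμt,
        ← ENNReal.ofReal_one, ← ENNReal.ofReal_sub _ ht0]
  · rw [hmapuniv, huniv]
end

section
/- If D is a countably based complete chain with no compact elements other than ⊥, then the family SProb(D) of Scott-continuous sub-probability measures on D, ordered by μ ≤ ν iff μ(U) ≤ ν(U) for all Scott-open U, is a continuous lattice. -/
open MeasureTheory

/-- The Scott-continuous sub-probability Borel measures on `D`. -/
def SProb (D : Type*) [Preorder D] : Type _ :=
  {μ : @Measure D (MeasurableSpace.generateFrom {U : Set D | ScottOpen U}) //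
    μ Set.univ ≤ 1 ∧ ∀ 𝒰 : Set (Set D), (∀ U ∈ 𝒰, ScottOpen U) → 𝒰.Nonempty →
      DirectedOn (· ⊆ ·) 𝒰 → μ (⋃₀ 𝒰) = ⨆ U ∈ 𝒰, μ U}

/-- The stochastic order on sub-probability measures: comparison on Scott-open sets. -/
def SProbLe {D : Type*} [Preorder D] (μ ν : SProb D) : Prop :=
  ∀ U : Set D, ScottOpen U → μ.val U ≤ ν.val U

/-- Least upper bound with respect to an explicit relation. -/
def IsLubRel {α : Type*} (le : α → α → Prop) (S : Set α) (m : α) : Prop :=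
  (∀ s ∈ S, le s m) ∧ ∀ b : α, (∀ s ∈ S, le s b) → le m b

/-- Greatest lower bound with respect to an explicit relation. -/
def IsGlbRel {α : Type*} (le : α → α → Prop) (S : Set α) (m : α) : Prop :=
  (∀ s ∈ S, le m s) ∧ ∀ b : α, (∀ s ∈ S, le b s) → le b m

/-- The way-below relation with respect to an explicit relation. -/
def WayBelowRel {α : Type*} (le : α → α → Prop) (x y : α) : Prop :=
  ∀ S : Set α, S.Nonempty → DirectedOn le S → ∀ d : α, IsLubRel le S d → le y d → ∃ s ∈ S, le x s

/-!
On a complete chain every Scott-open set is `univ` or some `Ioi x`, so an element of `SProb D`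
is determined by its total mass and its survival function `x ↦ μ (Ioi x)`, and the stochastic
order compares both pointwise. Conversely, every `f` that sends infima to suprema and is bounded
by `c ≤ 1` is the survival function of a measure of mass `c`: push Lebesgue measure on `(0, c]`
forward along the quantile `t ↦ sInf {z | f z < t}`. Pointwise suprema of survival functions
send infima to suprema again, so every family in `SProb D` has a least upper bound. For
continuity, a point mass `r • δ_c` is way below `μ` as soon as `r < μ {y | c ≪ y}`, and every
Scott-open `U` is the union of the sets `{y | c ≪ y}` with `c ∈ U`.
-/

open Set ENNReal

section Preorder

variable {α : Type*} [Preorder α] {x y z : α}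

theorem scottOpen_univ : ScottOpen (univ : Set α) := ⟨isUpperSet_univ, DirSupInacc.univ⟩

theorem ScottOpen.inter {U V : Set α} (hU : ScottOpen U) (hV : ScottOpen V) :
    ScottOpen (U ∩ V) :=
  ⟨hU.1.inter hV.1, DirSupInacc.inter hU.2 hV.2⟩

theorem ScottOpen.sUnion {𝒰 : Set (Set α)} (h𝒰 : ∀ U ∈ 𝒰, ScottOpen U) : ScottOpen (⋃₀ 𝒰) :=
  ⟨isUpperSet_sUnion fun U hU => (h𝒰 U hU).1, DirSupInacc.sUnion fun U hU => (h𝒰 U hU).2⟩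

theorem WayBelow.le (h : WayBelow x y) : x ≤ y := by
  obtain ⟨s, rfl, hxs⟩ := h {y} (singleton_nonempty y) (directedOn_singleton y) y
    isLUB_singleton le_rfl
  exact hxs

theorem WayBelow.mono_left (hxy : x ≤ y) (h : WayBelow y z) : WayBelow x z :=
  fun S hS hdir d hd hzd => (h S hS hdir d hd hzd).imp fun _ ⟨hs, hys⟩ => ⟨hs, hxy.trans hys⟩

theorem WayBelow.mono_right (h : WayBelow x y) (hyz : y ≤ z) : WayBelow x z :=
  fun S hS hdir d hd hzd => h S hS hdir d hd (hyz.trans hzd)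

theorem wayBelow_bot [OrderBot α] (y : α) : WayBelow ⊥ y :=
  fun _ ⟨s, hs⟩ _ _ _ _ => ⟨s, hs, bot_le⟩

end Preorder

section SemilatticeSup

variable {α : Type*} [SemilatticeSup α] {x y z : α}

theorem WayBelow.sup (hx : WayBelow x z) (hy : WayBelow y z) : WayBelow (x ⊔ y) z := by
  intro S hS hdir d hd hzd
  obtain ⟨s, hs, hxs⟩ := hx S hS hdir d hd hzd
  obtain ⟨t, ht, hyt⟩ := hy S hS hdir d hd hzd
  obtain ⟨u, hu, hsu, htu⟩ := hdir s hs t ht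
  exact ⟨u, hu, sup_le (hxs.trans hsu) (hyt.trans htu)⟩

theorem directedOn_setOf_wayBelow (z : α) : DirectedOn (· ≤ ·) {x | WayBelow x z} :=
  fun x hx y hy => ⟨x ⊔ y, hx.sup hy, le_sup_left, le_sup_right⟩

end SemilatticeSup

section CompleteLinearOrder

variable {D : Type*} [CompleteLinearOrder D]

theorem scottOpen_Ioi (x : D) : ScottOpen (Ioi x) := by
  refine ⟨isUpperSet_Ioi x, fun S _ _ d hd hxd => ?_⟩
  by_contra hSx
  exact hxd.not_ge (hd.2 fun s hs => not_lt.1 fun hxs => hSx ⟨s, hs, hxs⟩)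

theorem ScottOpen.eq_univ_or_eq_Ioi {U : Set D} (hU : ScottOpen U) :
    U = univ ∨ ∃ x, U = Ioi x := by
  rcases eq_or_ne U univ with h | h
  · exact .inl h
  refine .inr ⟨sSup Uᶜ, Subset.antisymm (fun y hy => ?_) (fun y hy => ?_)⟩
  · by_contra hle
    obtain ⟨z, hz, hzU⟩ := hU.2 Uᶜ (nonempty_compl.2 h) (isChain_of_trichotomous _).directedOn _
      (isLUB_sSup _) (hU.1 (not_lt.1 hle) hy)
    exact hz hzU
  · by_contra hyU
    exact (le_sSup hyU).not_gt hy

theorem measure_sUnion_of_apply_Ioi_sInf {m : MeasurableSpace D} {μ : Measure D}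
    (hμ : ∀ A : Set D, μ (Ioi (sInf A)) = ⨆ a ∈ A, μ (Ioi a)) {𝒰 : Set (Set D)}
    (h𝒰 : ∀ U ∈ 𝒰, ScottOpen U) : μ (⋃₀ 𝒰) = ⨆ U ∈ 𝒰, μ U := by
  refine le_antisymm ?_ (iSup₂_le fun U hU => measure_mono (subset_sUnion_of_mem hU))
  by_cases huniv : univ ∈ 𝒰
  · exact le_iSup₂_of_le univ huniv (measure_mono (subset_univ _))
  have h𝒰_eq : 𝒰 = Ioi '' {x | Ioi x ∈ 𝒰} := by
    refine Subset.antisymm (fun U hU => ?_) (image_subset_iff.2 fun _ hx => hx)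
    rcases (h𝒰 U hU).eq_univ_or_eq_Ioi with rfl | ⟨x, rfl⟩
    exacts [absurd hU huniv, mem_image_of_mem _ hU]
  rw [h𝒰_eq, sUnion_image, (isGLB_sInf _).biUnion_Ioi_eq, hμ, iSup_image]

section Continuous

variable (hD : ∀ y : D, IsLUB {b | WayBelow b y} y)
include hD

theorem WayBelow.exists_wayBelow_wayBelow {b d : D} (h : WayBelow b d) :
    ∃ c, WayBelow b c ∧ WayBelow c d := by
  set T := {a | ∃ c, WayBelow a c ∧ WayBelow c d}
  have hT : IsLUB T d :=
    ⟨fun _ ⟨_, hac, hcd⟩ => hac.le.trans hcd.le,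
      fun u hu => (hD d).2 fun c hcd => (hD c).2 fun a hac => hu ⟨c, hac, hcd⟩⟩
  obtain ⟨a, ⟨c, hac, hcd⟩, hba⟩ := h T ⟨⊥, ⊥, wayBelow_bot _, wayBelow_bot _⟩
    (isChain_of_trichotomous T).directedOn d hT le_rfl
  exact ⟨c, hac.mono_left hba, hcd⟩

theorem scottOpen_setOf_wayBelow (b : D) : ScottOpen {y | WayBelow b y} := by
  refine ⟨fun y z hyz hy => WayBelow.mono_right hy hyz, fun S hS hdir d hd hbd => ?_⟩
  obtain ⟨c, hbc, hcd⟩ := WayBelow.exists_wayBelow_wayBelow hD hbd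
  obtain ⟨s, hs, hcs⟩ := hcd S hS hdir d hd le_rfl
  exact ⟨s, hs, hbc.mono_right hcs⟩

theorem ScottOpen.biUnion_setOf_wayBelow {U : Set D} (hU : ScottOpen U) :
    ⋃ b ∈ U, {y | WayBelow b y} = U := by
  refine Subset.antisymm (iUnion₂_subset fun b hb y hby => hU.1 hby.le hb) fun y hy => ?_
  obtain ⟨b, hby, hb⟩ :=
    hU.2 _ ⟨⊥, wayBelow_bot y⟩ (isChain_of_trichotomous _).directedOn y (hD y) hy
  exact mem_biUnion hb hby

end Continuous

end CompleteLinearOrder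

abbrev scottMeasurableSpace (D : Type*) [Preorder D] : MeasurableSpace D :=
  MeasurableSpace.generateFrom {U | ScottOpen U}

attribute [local instance] scottMeasurableSpace

section SProbOrder

variable {D : Type*} [Preorder D]

theorem ScottOpen.measurableSet {U : Set D} (hU : ScottOpen U) : MeasurableSet U :=
  MeasurableSpace.measurableSet_generateFrom hU

theorem SProb.ext {μ ν : SProb D} (h : ∀ U, ScottOpen U → μ.val U = ν.val U) : μ = ν :=
  have : IsFiniteMeasure μ.val := ⟨μ.2.1.trans_lt one_lt_top⟩
  Subtype.ext <| ext_of_generate_finite _ rfl (fun _ hU _ hV _ => hU.inter hV) h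
    (h univ scottOpen_univ)

instance : PartialOrder (SProb D) where
  le := SProbLe
  le_refl _ _ _ := le_rfl
  le_trans _ _ _ h₁ h₂ U hU := (h₁ U hU).trans (h₂ U hU)
  le_antisymm _ _ h₁ h₂ := SProb.ext fun U hU => (h₁ U hU).antisymm (h₂ U hU)

end SProbOrder

section Survival

variable {D : Type*} [CompleteLinearOrder D] {f : D → ℝ≥0∞} {c : ℝ≥0∞}

noncomputable def quantile (f : D → ℝ≥0∞) (t : ℝ) : D := sInf {z | f z < ENNReal.ofReal t}

theorem measurable_quantile (f : D → ℝ≥0∞) : Measurable (quantile f) := by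
  refine measurable_generateFrom fun U hU => IsLowerSet.ordConnected ?_ |>.measurableSet
  exact fun s t hts hs =>
    hU.1 (sInf_le_sInf fun z hz => hz.trans_le (ofReal_le_ofReal hts)) hs

theorem le_of_lt_quantile {x : D} {t : ℝ} (h : x < quantile f t) : ENNReal.ofReal t ≤ f x :=
  le_of_not_gt fun hlt => h.not_ge (sInf_le hlt)

noncomputable def survivalMeasure (f : D → ℝ≥0∞) (c : ℝ≥0∞) : Measure D :=
  (volume.restrict (Ioc 0 c.toReal)).map (quantile f)

theorem survivalMeasure_univ (hc : c ≠ ∞) : survivalMeasure f c univ = c := by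
  rw [survivalMeasure, Measure.map_apply (measurable_quantile f) MeasurableSet.univ,
    preimage_univ, Measure.restrict_apply_univ, Real.volume_Ioc, sub_zero, ofReal_toReal hc]

variable (hf : ∀ A : Set D, f (sInf A) = ⨆ a ∈ A, f a)
include hf

theorem antitone_of_apply_sInf : Antitone f := by
  intro a b hab
  have := hf {a, b}
  rw [sInf_pair, inf_eq_left.2 hab, iSup_insert, iSup_singleton] at this
  exact this ▸ le_sup_right

theorem apply_quantile_le (t : ℝ) : f (quantile f t) ≤ ENNReal.ofReal t := by
  rw [quantile, hf]
  exact iSup₂_le fun _ hz => hz.le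

theorem lt_quantile_of_lt {x : D} {t : ℝ} (h : ENNReal.ofReal t < f x) : x < quantile f t :=
  lt_of_not_ge fun hq =>
    (h.trans_le ((antitone_of_apply_sInf hf hq).trans (apply_quantile_le hf t))).false

theorem survivalMeasure_Ioi (hfc : ∀ x, f x ≤ c) (hc : c ≠ ∞) (x : D) :
    survivalMeasure f c (Ioi x) = f x := by
  have hfx : f x ≠ ∞ := ne_top_of_le_ne_top hc (hfc x)
  rw [survivalMeasure, Measure.map_apply (measurable_quantile f) (scottOpen_Ioi x).measurableSet,
    Measure.restrict_apply' measurableSet_Ioc]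
  -- up to its endpoint, the preimage of `Ioi x` in `(0, c]` is `(0, f x)`
  refine le_antisymm ?_ ?_
  · calc _ ≤ volume (Ioc 0 (f x).toReal) :=
          measure_mono fun t (ht : t ∈ quantile f ⁻¹' Ioi x ∩ Ioc 0 c.toReal) =>
            ⟨ht.2.1, (ofReal_le_iff_le_toReal hfx).1 (le_of_lt_quantile ht.1)⟩
      _ = f x := by rw [Real.volume_Ioc, sub_zero, ofReal_toReal hfx]
  · calc f x = volume (Ioo 0 (f x).toReal) := by rw [Real.volume_Ioo, sub_zero, ofReal_toReal hfx]
      _ ≤ _ := measure_mono fun t ⟨ht0, htx⟩ =>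
          show t ∈ quantile f ⁻¹' Ioi x ∩ Ioc 0 c.toReal from
            ⟨lt_quantile_of_lt hf ((ofReal_lt_iff_lt_toReal ht0.le hfx).2 htx), ht0,
              htx.le.trans (toReal_mono hc (hfc x))⟩

end Survival

namespace SProb

variable {D : Type*} [CompleteLinearOrder D]

theorem apply_Ioi_sInf (μ : SProb D) (A : Set D) :
    μ.val (Ioi (sInf A)) = ⨆ a ∈ A, μ.val (Ioi a) := by
  rcases A.eq_empty_or_nonempty with rfl | hA
  · simp
  have hchain : IsChain (· ⊆ ·) (Ioi '' A) := by
    rintro _ ⟨a, -, rfl⟩ _ ⟨b, -, rfl⟩ -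
    exact (le_total b a).imp Ioi_subset_Ioi_iff.2 Ioi_subset_Ioi_iff.2
  have := μ.2.2 (Ioi '' A) (forall_mem_image.2 fun a _ => scottOpen_Ioi a) (hA.image _)
    hchain.directedOn
  rwa [sUnion_image, (isGLB_sInf _).biUnion_Ioi_eq, iSup_image] at this

theorem apply_sUnion (μ : SProb D) {𝒰 : Set (Set D)} (h𝒰 : ∀ U ∈ 𝒰, ScottOpen U) :
    μ.val (⋃₀ 𝒰) = ⨆ U ∈ 𝒰, μ.val U :=
  measure_sUnion_of_apply_Ioi_sInf μ.apply_Ioi_sInf h𝒰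

section OfSurvival

variable {f : D → ℝ≥0∞} {c : ℝ≥0∞}

noncomputable def ofSurvival (f : D → ℝ≥0∞) (c : ℝ≥0∞)
    (hf : ∀ A : Set D, f (sInf A) = ⨆ a ∈ A, f a) (hfc : ∀ x, f x ≤ c) (hc : c ≤ 1) :
    SProb D :=
  have hc_ne_top : c ≠ ∞ := ne_top_of_le_ne_top one_ne_top hc
  ⟨survivalMeasure f c, (survivalMeasure_univ hc_ne_top).trans_le hc,
    fun _ h𝒰 _ _ => measure_sUnion_of_apply_Ioi_sInf
      (by simpa only [survivalMeasure_Ioi hf hfc hc_ne_top] using hf) h𝒰⟩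

variable (hf : ∀ A : Set D, f (sInf A) = ⨆ a ∈ A, f a) (hfc : ∀ x, f x ≤ c) (hc : c ≤ 1)

theorem ofSurvival_univ : (ofSurvival f c hf hfc hc).val univ = c :=
  survivalMeasure_univ (ne_top_of_le_ne_top one_ne_top hc)

theorem ofSurvival_Ioi (x : D) : (ofSurvival f c hf hfc hc).val (Ioi x) = f x :=
  survivalMeasure_Ioi hf hfc (ne_top_of_le_ne_top one_ne_top hc) x

end OfSurvival

noncomputable instance : SupSet (SProb D) where
  sSup S := ofSurvival (fun x => ⨆ μ ∈ S, μ.val (Ioi x)) (⨆ μ ∈ S, μ.val univ)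
    (fun A => by simp only [apply_Ioi_sInf]; exact iSup₂_comm _)
    (fun _ => iSup₂_mono fun _ _ => measure_mono (subset_univ _)) (iSup₂_le fun μ _ => μ.2.1)

theorem sSup_apply (S : Set (SProb D)) {U : Set D} (hU : ScottOpen U) :
    (sSup S).val U = ⨆ μ ∈ S, μ.val U := by
  rcases hU.eq_univ_or_eq_Ioi with rfl | ⟨x, rfl⟩
  exacts [ofSurvival_univ _ _ _, ofSurvival_Ioi _ _ _ x]

theorem isLUB_sSup (S : Set (SProb D)) : IsLUB S (sSup S) :=
  ⟨fun μ hμ _ hU => (sSup_apply S hU).symm ▸ le_iSup₂_of_le μ hμ le_rfl,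
    fun _ hν U hU => (sSup_apply S hU).symm ▸ iSup₂_le fun _ hμ => hν hμ U hU⟩

noncomputable instance : CompleteLattice (SProb D) := completeLatticeOfSup _ isLUB_sSup

noncomputable def pointMass (c : D) (r : ℝ≥0∞) (hr : r ≤ 1) : SProb D :=
  ⟨r • Measure.dirac c, by simpa using hr, fun 𝒰 h𝒰 _ _ => by
    refine le_antisymm ?_ (iSup₂_le fun U hU => measure_mono (subset_sUnion_of_mem hU))
    by_cases hc : c ∈ ⋃₀ 𝒰
    · obtain ⟨U, hU, hcU⟩ := hc
      refine le_iSup₂_of_le U hU ?_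
      simp [Measure.dirac_apply_of_mem hcU,
        Measure.dirac_apply_of_mem (subset_sUnion_of_mem hU hcU)]
    · simp [Measure.dirac_apply' _ (ScottOpen.sUnion h𝒰).measurableSet, hc]⟩

section PointMass

variable {c : D} {r : ℝ≥0∞} {hr : r ≤ 1}

theorem pointMass_apply_of_mem {U : Set D} (hc : c ∈ U) : (pointMass c r hr).val U = r := by
  simp [pointMass, Measure.dirac_apply_of_mem hc]

theorem pointMass_le {σ : SProb D} (h : ∀ U, ScottOpen U → c ∈ U → r ≤ σ.val U) :
    pointMass c r hr ≤ σ := by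
  intro U hU
  by_cases hc : c ∈ U
  · exact (pointMass_apply_of_mem hc).trans_le (h U hU hc)
  · simp [pointMass, Measure.dirac_apply' _ hU.measurableSet, hc]

variable (hD : ∀ y : D, IsLUB {b | WayBelow b y} y)
include hD

theorem apply_eq_iSup_wayBelow (μ : SProb D) {U : Set D} (hU : ScottOpen U) :
    μ.val U = ⨆ b ∈ U, μ.val {y | WayBelow b y} := by
  conv_lhs => rw [← hU.biUnion_setOf_wayBelow hD, ← sUnion_image]
  rw [μ.apply_sUnion (forall_mem_image.2 fun b _ => scottOpen_setOf_wayBelow hD b), iSup_image]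

theorem pointMass_wayBelow {μ : SProb D} (hrμ : r < μ.val {y | WayBelow c y}) :
    WayBelow (pointMass c r hr) μ := by
  intro S _ _ d hd hμd
  have hc := scottOpen_setOf_wayBelow hD c
  have : r < ⨆ σ ∈ S, σ.val {y | WayBelow c y} :=
    hrμ.trans_le <| (hμd _ hc).trans <| (hd.2 (isLUB_sSup S).1 _ hc).trans_eq (sSup_apply S hc)
  obtain ⟨σ, hσS, hrσ⟩ := lt_biSup_iff.1 this
  exact ⟨σ, hσS, pointMass_le fun U hU hcU =>
    hrσ.le.trans (measure_mono fun y hy => hU.1 (WayBelow.le hy) hcU)⟩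

theorem isLUB_setOf_wayBelow (μ : SProb D) : IsLUB {ν | WayBelow ν μ} μ := by
  refine ⟨fun ν hν => hν.le, fun ν hν U hU => ?_⟩
  rw [apply_eq_iSup_wayBelow hD μ hU]
  refine iSup₂_le fun c hc => le_of_forall_lt_imp_le_of_dense fun r hrμ => ?_
  have hr : r ≤ 1 := hrμ.le.trans <| (measure_mono (subset_univ _)).trans μ.2.1
  calc r = (pointMass c r hr).val U := (pointMass_apply_of_mem hc).symm
    _ ≤ ν.val U := hν (pointMass_wayBelow hD hrμ) U hU

end PointMass

end SProb

theorem stmt8_general {D : Type*} [CompleteLinearOrder D]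
    (B : Set D)
    (hbasis : ∀ y : D, DirectedOn (· ≤ ·) {b ∈ B | WayBelow b y} ∧
      IsLUB {b ∈ B | WayBelow b y} y) :
    (∀ μ ν : SProb D, SProbLe μ ν → SProbLe ν μ → μ = ν) ∧
    (∀ S : Set (SProb D), ∃ m : SProb D, IsLubRel SProbLe S m) ∧
    (∀ S : Set (SProb D), ∃ m : SProb D, IsGlbRel SProbLe S m) ∧
    (∀ μ : SProb D, DirectedOn SProbLe {ν : SProb D | WayBelowRel SProbLe ν μ} ∧
      IsLubRel SProbLe {ν : SProb D | WayBelowRel SProbLe ν μ} μ) := by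
  have hD : ∀ y : D, IsLUB {b | WayBelow b y} y :=
    fun y => ⟨fun _ hb => hb.le, fun _ hu => (hbasis y).2.2 fun _ hb => hu hb.2⟩
  exact ⟨fun _ _ h₁ h₂ => le_antisymm h₁ h₂, fun S => ⟨sSup S, SProb.isLUB_sSup S⟩,
    fun S => ⟨sInf S, isGLB_sInf S⟩,
    fun μ => ⟨directedOn_setOf_wayBelow μ, SProb.isLUB_setOf_wayBelow hD μ⟩⟩

/-- If `D` is a countably based complete chain whose only compact element is `⊥`, then
`SProb D`, in the stochastic order, is a continuous lattice: the order is antisymmetric,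
every subset has a least upper bound and a greatest lower bound, and every element is the
directed supremum of the elements way below it. -/
theorem stmt8 {D : Type*} [CompleteLinearOrder D]
    (B : Set D) (hBcount : B.Countable)
    (hbasis : ∀ y : D, DirectedOn (· ≤ ·) {b ∈ B | WayBelow b y} ∧
      IsLUB {b ∈ B | WayBelow b y} y)
    (hcompact : ∀ k : D, WayBelow k k → k = ⊥) :
    (∀ μ ν : SProb D, SProbLe μ ν → SProbLe ν μ → μ = ν) ∧
    (∀ S : Set (SProb D), ∃ m : SProb D, IsLubRel SProbLe S m) ∧
    (∀ S : Set (SProb D), ∃ m : SProb D, IsGlbRel SProbLe S m) ∧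
    (∀ μ : SProb D, DirectedOn SProbLe {ν : SProb D | WayBelowRel SProbLe ν μ} ∧
      IsLubRel SProbLe {ν : SProb D | WayBelowRel SProbLe ν μ} μ) :=
  stmt8_general B hbasis
end

section
/- Let D be a dcpo and let μ = Σ_{x∈F} r_x·δ_x and ν = Σ_{y∈G} s_y·δ_y be simple valuations on D (F, G finite, coefficients nonnegative with sums ≤ 1). If there exists a family of transport numbers t_{x,y} ≥ 0 with Σ_y t_{x,y} = r_x for all x ∈ F, Σ_x t_{x,y} ≤ s_y for all y ∈ G, and t_{x,y} > 0 ⟹ x ≤ y, then μ(U) ≤ ν(U) for every Scott-open set U ⊆ D. -/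
/-- Splitting Lemma, easy direction: if simple valuations `Σ_{x∈F} r_x δ_x` and
`Σ_{y∈G} s_y δ_y` on a dcpo admit transport numbers, then the first is below the second
on every Scott-open set. -/
theorem stmt9 {D : Type*} [PartialOrder D]
    (hdcpo : ∀ S : Set D, S.Nonempty → DirectedOn (· ≤ ·) S → ∃ d : D, IsLUB S d)
    (F G : Finset D) (r s : D → NNReal)
    (hr : ∑ x ∈ F, r x ≤ 1) (hs : ∑ y ∈ G, s y ≤ 1)
    (t : D → D → NNReal)
    (ht1 : ∀ x ∈ F, ∑ y ∈ G, t x y = r x)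
    (ht2 : ∀ y ∈ G, ∑ x ∈ F, t x y ≤ s y)
    (ht3 : ∀ x ∈ F, ∀ y ∈ G, 0 < t x y → x ≤ y) :
    ∀ U : Set D, ScottOpen U →
      ∑ x ∈ F, U.indicator r x ≤ ∑ y ∈ G, U.indicator s y := by
  intro U hU
  classical
  calc ∑ x ∈ F, U.indicator r x
      = ∑ x ∈ F.filter (· ∈ U), r x := by
        rw [Finset.sum_filter]
        refine Finset.sum_congr rfl fun x _ => ?_
        by_cases hx : x ∈ U <;> simp [Set.indicator, hx]
    _ = ∑ x ∈ F.filter (· ∈ U), ∑ y ∈ G, t x y := by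
        refine Finset.sum_congr rfl fun x hx => ?_
        rw [ht1 x (Finset.mem_filter.mp hx).1]
    _ = ∑ y ∈ G, ∑ x ∈ F.filter (· ∈ U), t x y := Finset.sum_comm
    _ ≤ ∑ y ∈ G, U.indicator s y := by
        refine Finset.sum_le_sum fun y hy => ?_
        by_cases hyU : y ∈ U
        · rw [Set.indicator_of_mem hyU]
          calc ∑ x ∈ F.filter (· ∈ U), t x y ≤ ∑ x ∈ F, t x y :=
                Finset.sum_le_sum_of_subset (Finset.filter_subset _ _)
            _ ≤ s y := ht2 y hy
        · rw [Set.indicator_of_notMem hyU]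
          refine le_of_eq (Finset.sum_eq_zero fun x hx => ?_)
          obtain ⟨hxF, hxU⟩ := Finset.mem_filter.mp hx
          by_contra h
          exact hyU (hU.1 (ht3 x hxF y hy (pos_iff_ne_zero.mpr h)) hxU)
end

section
/- The canonical binary-expansion surjection φ : {0,1}^ℕ → [0,1] (with {0,1}^ℕ in the lexicographic order) preserves all suprema and all infima, and hence has a lower adjoint j : [0,1] → {0,1}^ℕ satisfying φ(j(r)) = r for all r ∈ [0,1] and j(r) ≤ a ⟺ r ≤ φ(a). -/
/-- The canonical binary-expansion map `{0,1}^ℕ → [0,1]`. -/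
noncomputable def cantorPhi (a : ℕ → Bool) : ℝ :=
  ∑' n : ℕ, if a n then (1 / 2 : ℝ) ^ (n + 1) else 0

/-- The lexicographic order on `{0,1}^ℕ` (with `false < true`). -/
def lexLe (a b : ℕ → Bool) : Prop :=
  a = b ∨ ∃ n : ℕ, a n < b n ∧ ∀ i < n, a i = b i

/-!
`φ` is monotone for the lexicographic order, and on `[0,1]` it has both adjoints, given by the
two greedy binary expansions: taking digit `n` to be `1` when `2^{-(n+1)}` is strictly below the
remainder gives the lower adjoint `j` (`j r ≤ a ↔ r ≤ φ a`), taking it when `2^{-(n+1)}` is at most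
the remainder gives the upper adjoint `g` (`a ≤ g b ↔ φ a ≤ b`). Both expansions sum to their
argument. A map with an upper adjoint preserves suprema and one with a lower adjoint preserves
infima; the values of `b` outside `[0,1]` are harmless because `φ` takes values in `[0,1]`.
-/

open Finset

namespace CantorPhi

noncomputable def cantorTerm (a : ℕ → Bool) (n : ℕ) : ℝ := if a n then (1 / 2 : ℝ) ^ (n + 1) else 0

lemma cantorTerm_nonneg (a : ℕ → Bool) (n : ℕ) : 0 ≤ cantorTerm a n := by
  unfold cantorTerm; split <;> positivity

lemma cantorTerm_le (a : ℕ → Bool) (n : ℕ) : cantorTerm a n ≤ (1 / 2 : ℝ) ^ (n + 1) := by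
  unfold cantorTerm; split
  · exact le_rfl
  · positivity

lemma summable_half_pow_succ : Summable fun n : ℕ => (1 / 2 : ℝ) ^ (n + 1) := by
  simpa only [pow_succ] using summable_geometric_two.mul_right (1 / 2 : ℝ)

lemma summable_cantorTerm (a : ℕ → Bool) : Summable (cantorTerm a) :=
  .of_nonneg_of_le (cantorTerm_nonneg a) (cantorTerm_le a) summable_half_pow_succ

lemma tsum_half_pow_add_succ (n : ℕ) : ∑' k : ℕ, (1 / 2 : ℝ) ^ (k + n + 1) = (1 / 2 : ℝ) ^ n := by
  have h : ∀ k : ℕ, (1 / 2 : ℝ) ^ (k + n + 1) = (1 / 2) ^ (n + 1) * (1 / 2) ^ k := fun k => by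
    ring
  rw [tsum_congr h, tsum_mul_left, tsum_geometric_two, pow_succ]
  ring

lemma tsum_cantorTerm_add_le (a : ℕ → Bool) (n : ℕ) :
    ∑' k, cantorTerm a (k + n) ≤ (1 / 2 : ℝ) ^ n :=
  calc ∑' k, cantorTerm a (k + n) ≤ ∑' k : ℕ, (1 / 2 : ℝ) ^ (k + n + 1) :=
        Summable.tsum_le_tsum (fun k => cantorTerm_le a (k + n))
          ((summable_cantorTerm a).comp_injective (add_left_injective n))
          (summable_half_pow_succ.comp_injective (add_left_injective n))
    _ = (1 / 2 : ℝ) ^ n := tsum_half_pow_add_succ n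

noncomputable def cantorPartial (a : ℕ → Bool) (n : ℕ) : ℝ := ∑ k ∈ range n, cantorTerm a k

lemma cantorPartial_succ (a : ℕ → Bool) (n : ℕ) :
    cantorPartial a (n + 1) = cantorPartial a n + cantorTerm a n :=
  sum_range_succ _ _

lemma cantorPartial_congr {a b : ℕ → Bool} {n : ℕ} (h : ∀ i < n, a i = b i) :
    cantorPartial a n = cantorPartial b n :=
  sum_congr rfl fun i hi => by simp only [cantorTerm, h i (mem_range.mp hi)]

lemma cantorPhi_eq_cantorPartial_add_tsum (a : ℕ → Bool) (n : ℕ) :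
    cantorPhi a = cantorPartial a n + ∑' k, cantorTerm a (k + n) :=
  ((summable_cantorTerm a).sum_add_tsum_nat_add n).symm

lemma cantorPartial_le_cantorPhi (a : ℕ → Bool) (n : ℕ) : cantorPartial a n ≤ cantorPhi a := by
  rw [cantorPhi_eq_cantorPartial_add_tsum a n]
  linarith [(tsum_nonneg fun k => cantorTerm_nonneg a (k + n) : 0 ≤ ∑' k, cantorTerm a (k + n))]

lemma cantorPhi_le_cantorPartial_add (a : ℕ → Bool) (n : ℕ) :
    cantorPhi a ≤ cantorPartial a n + (1 / 2 : ℝ) ^ n := by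
  rw [cantorPhi_eq_cantorPartial_add_tsum a n]
  linarith [tsum_cantorTerm_add_le a n]

lemma cantorPhi_nonneg (a : ℕ → Bool) : 0 ≤ cantorPhi a := by
  simpa [cantorPartial] using cantorPartial_le_cantorPhi a 0

lemma cantorPhi_le_one (a : ℕ → Bool) : cantorPhi a ≤ 1 := by
  simpa [cantorPartial] using cantorPhi_le_cantorPartial_add a 0

lemma cantorPartial_add_le_cantorPhi {a : ℕ → Bool} {n : ℕ} (h : a n = true) :
    cantorPartial a n + (1 / 2 : ℝ) ^ (n + 1) ≤ cantorPhi a := by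
  simpa [cantorPartial_succ, cantorTerm, h] using cantorPartial_le_cantorPhi a (n + 1)

lemma cantorPhi_le_cantorPartial_add_of_false {a : ℕ → Bool} {n : ℕ} (h : a n = false) :
    cantorPhi a ≤ cantorPartial a n + (1 / 2 : ℝ) ^ (n + 1) := by
  simpa [cantorPartial_succ, cantorTerm, h] using cantorPhi_le_cantorPartial_add a (n + 1)

lemma lexLe_or_exists_lt (a b : ℕ → Bool) :
    lexLe a b ∨ ∃ n, b n < a n ∧ ∀ i < n, a i = b i := by
  classical
  by_cases hab : a = b
  · exact .inl (.inl hab)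
  have hex : ∃ n, a n ≠ b n := Function.ne_iff.mp hab
  have hpre : ∀ i < Nat.find hex, a i = b i := fun i hi => not_not.mp (Nat.find_min hex hi)
  rcases lt_or_gt_of_ne (Nat.find_spec hex) with hlt | hgt
  · exact .inl (.inr ⟨_, hlt, hpre⟩)
  · exact .inr ⟨_, hgt, hpre⟩

lemma cantorPhi_mono {a b : ℕ → Bool} (h : lexLe a b) : cantorPhi a ≤ cantorPhi b := by
  rcases h with rfl | ⟨n, hn, hpre⟩
  · exact le_rfl
  · obtain ⟨ha, hb⟩ : a n = false ∧ b n = true := by revert hn; cases a n <;> cases b n <;> simp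
    calc cantorPhi a ≤ cantorPartial a n + (1 / 2 : ℝ) ^ (n + 1) :=
          cantorPhi_le_cantorPartial_add_of_false ha
      _ = cantorPartial b n + (1 / 2 : ℝ) ^ (n + 1) := by rw [cantorPartial_congr hpre]
      _ ≤ cantorPhi b := cantorPartial_add_le_cantorPhi hb

lemma le_of_forall_le_add_half_pow {x y : ℝ} (h : ∀ n : ℕ, x ≤ y + (1 / 2 : ℝ) ^ n) : x ≤ y := by
  have hlim : Filter.Tendsto (fun n : ℕ => y + (1 / 2 : ℝ) ^ n) Filter.atTop (nhds y) := by
    simpa using tendsto_const_nhds.add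
      (tendsto_pow_atTop_nhds_zero_of_lt_one (r := (1 / 2 : ℝ)) (by norm_num) (by norm_num))
  exact ge_of_tendsto' hlim h

section Greedy

variable (R : ℝ → ℝ → Prop) [DecidableRel R]

noncomputable def greedyRem (r : ℝ) : ℕ → ℝ
  | 0 => r
  | n + 1 =>
    if R ((1 / 2) ^ (n + 1)) (greedyRem r n) then greedyRem r n - (1 / 2) ^ (n + 1)
    else greedyRem r n

noncomputable def greedyDigits (r : ℝ) (n : ℕ) : Bool :=
  decide (R ((1 / 2) ^ (n + 1)) (greedyRem R r n))

variable {R}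

lemma greedyRem_eq (r : ℝ) (n : ℕ) : greedyRem R r n = r - cantorPartial (greedyDigits R r) n := by
  induction n with
  | zero => simp [greedyRem, cantorPartial]
  | succ n ih =>
    rw [greedyRem, cantorPartial_succ, ← sub_sub, ← ih]
    by_cases h : R ((1 / 2) ^ (n + 1)) (greedyRem R r n) <;>
      simp only [h, cantorTerm, greedyDigits, decide_true, decide_false, Bool.false_eq_true,
        ↓reduceIte, sub_zero]

lemma greedyDigits_eq_true_iff {r : ℝ} {n : ℕ} :
    greedyDigits R r n = true ↔ R ((1 / 2) ^ (n + 1)) (r - cantorPartial (greedyDigits R r) n) := by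
  rw [greedyDigits, decide_eq_true_iff, greedyRem_eq]

lemma greedyRem_nonneg (hR : ∀ t x, R t x → t ≤ x) {r : ℝ} (hr : 0 ≤ r) (n : ℕ) :
    0 ≤ greedyRem R r n := by
  induction n with
  | zero => exact hr
  | succ n ih =>
    rw [greedyRem]
    split_ifs with h
    · linarith [hR _ _ h]
    · exact ih

lemma greedyRem_le (hR : ∀ t x, t < x → R t x) {r : ℝ} (hr : r ≤ 1) (n : ℕ) :
    greedyRem R r n ≤ (1 / 2 : ℝ) ^ n := by
  induction n with
  | zero => simpa [greedyRem] using hr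
  | succ n ih =>
    rw [greedyRem]
    split_ifs with h
    · linarith [pow_succ (1 / 2 : ℝ) n]
    · exact not_lt.mp (mt (hR _ _) h)

lemma cantorPhi_greedyDigits (hR₁ : ∀ t x, R t x → t ≤ x) (hR₂ : ∀ t x, t < x → R t x)
    {r : ℝ} (hr : r ∈ Set.Icc (0 : ℝ) 1) : cantorPhi (greedyDigits R r) = r := by
  apply le_antisymm <;> refine le_of_forall_le_add_half_pow fun n => ?_ <;>
    have hrem := greedyRem_eq (R := R) r n
  · linarith [cantorPhi_le_cantorPartial_add (greedyDigits R r) n, greedyRem_nonneg hR₁ hr.1 n]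
  · linarith [cantorPartial_le_cantorPhi (greedyDigits R r) n, greedyRem_le hR₂ hr.2 n]

end Greedy

noncomputable def lowerAdjoint : ℝ → ℕ → Bool := greedyDigits (· < ·)

noncomputable def upperAdjoint : ℝ → ℕ → Bool := greedyDigits (· ≤ ·)

lemma cantorPhi_lowerAdjoint {r : ℝ} (hr : r ∈ Set.Icc (0 : ℝ) 1) :
    cantorPhi (lowerAdjoint r) = r :=
  cantorPhi_greedyDigits (fun _ _ => le_of_lt) (fun _ _ h => h) hr

lemma cantorPhi_upperAdjoint {b : ℝ} (hb : b ∈ Set.Icc (0 : ℝ) 1) :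
    cantorPhi (upperAdjoint b) = b :=
  cantorPhi_greedyDigits (fun _ _ h => h) (fun _ _ => le_of_lt) hb

lemma lexLe_lowerAdjoint_iff {r : ℝ} (hr : r ∈ Set.Icc (0 : ℝ) 1) (a : ℕ → Bool) :
    lexLe (lowerAdjoint r) a ↔ r ≤ cantorPhi a := by
  refine ⟨fun h => cantorPhi_lowerAdjoint hr ▸ cantorPhi_mono h, fun hra => ?_⟩
  refine (lexLe_or_exists_lt _ a).resolve_right ?_
  rintro ⟨n, hn, hpre⟩
  obtain ⟨ha, hj⟩ : a n = false ∧ lowerAdjoint r n = true := by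
    revert hn; cases a n <;> cases lowerAdjoint r n <;> simp
  have hdigit := greedyDigits_eq_true_iff.mp hj
  rw [← lowerAdjoint, cantorPartial_congr hpre] at hdigit
  linarith [cantorPhi_le_cantorPartial_add_of_false ha]

lemma lexLe_upperAdjoint_iff {b : ℝ} (hb : b ∈ Set.Icc (0 : ℝ) 1) (a : ℕ → Bool) :
    lexLe a (upperAdjoint b) ↔ cantorPhi a ≤ b := by
  refine ⟨fun h => cantorPhi_upperAdjoint hb ▸ cantorPhi_mono h, fun hab => ?_⟩
  refine (lexLe_or_exists_lt a _).resolve_right ?_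
  rintro ⟨n, hn, hpre⟩
  obtain ⟨hg, ha⟩ : upperAdjoint b n = false ∧ a n = true := by
    revert hn; cases a n <;> cases upperAdjoint b n <;> simp
  have hdigit := mt greedyDigits_eq_true_iff.mpr (by simpa [upperAdjoint] using hg)
  rw [← upperAdjoint, ← cantorPartial_congr hpre, not_le] at hdigit
  linarith [cantorPartial_add_le_cantorPhi ha]

lemma isLUB_image_cantorPhi {S : Set (ℕ → Bool)} (hS : S.Nonempty) {m : ℕ → Bool}
    (hm : IsLubRel lexLe S m) : IsLUB (cantorPhi '' S) (cantorPhi m) := by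
  refine ⟨Set.forall_mem_image.mpr fun s hs => cantorPhi_mono (hm.1 s hs), fun b hb => ?_⟩
  rcases le_or_gt 1 b with hb1 | hb1
  · exact (cantorPhi_le_one m).trans hb1
  obtain ⟨s₀, hs₀⟩ := hS
  have hbI : b ∈ Set.Icc (0 : ℝ) 1 :=
    ⟨(cantorPhi_nonneg s₀).trans (hb ⟨s₀, hs₀, rfl⟩), hb1.le⟩
  refine (lexLe_upperAdjoint_iff hbI m).mp (hm.2 _ fun s hs => ?_)
  exact (lexLe_upperAdjoint_iff hbI s).mpr (hb ⟨s, hs, rfl⟩)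

lemma isGLB_image_cantorPhi {S : Set (ℕ → Bool)} (hS : S.Nonempty) {m : ℕ → Bool}
    (hm : IsGlbRel lexLe S m) : IsGLB (cantorPhi '' S) (cantorPhi m) := by
  refine ⟨Set.forall_mem_image.mpr fun s hs => cantorPhi_mono (hm.1 s hs), fun b hb => ?_⟩
  rcases le_or_gt b 0 with hb0 | hb0
  · exact hb0.trans (cantorPhi_nonneg m)
  obtain ⟨s₀, hs₀⟩ := hS
  have hbI : b ∈ Set.Icc (0 : ℝ) 1 :=
    ⟨hb0.le, (hb ⟨s₀, hs₀, rfl⟩).trans (cantorPhi_le_one s₀)⟩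
  refine (lexLe_lowerAdjoint_iff hbI m).mp (hm.2 _ fun s hs => ?_)
  exact (lexLe_lowerAdjoint_iff hbI s).mpr (hb ⟨s, hs, rfl⟩)

end CantorPhi

open CantorPhi in
/-- The binary-expansion surjection `φ : {0,1}^ℕ → [0,1]` (lexicographic order on the
source) preserves all suprema and all infima, and has a lower adjoint
`j : [0,1] → {0,1}^ℕ` with `φ(j r) = r` and `j r ≤ a ⟺ r ≤ φ a`. -/
theorem stmt15 :
    (∀ S : Set (ℕ → Bool), S.Nonempty → ∀ m : ℕ → Bool,
      IsLubRel lexLe S m → IsLUB (cantorPhi '' S) (cantorPhi m)) ∧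
    (∀ S : Set (ℕ → Bool), S.Nonempty → ∀ m : ℕ → Bool,
      IsGlbRel lexLe S m → IsGLB (cantorPhi '' S) (cantorPhi m)) ∧
    ∃ j : ℝ → (ℕ → Bool), ∀ r ∈ Set.Icc (0:ℝ) 1,
      cantorPhi (j r) = r ∧ ∀ a : ℕ → Bool, (lexLe (j r) a ↔ r ≤ cantorPhi a) :=
  ⟨fun _ hS _ => isLUB_image_cantorPhi hS, fun _ hS _ => isGLB_image_cantorPhi hS,
    lowerAdjoint, fun _ hr => ⟨cantorPhi_lowerAdjoint hr, lexLe_lowerAdjoint_iff hr⟩⟩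
end
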